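/- arXiv:2411.01921 — 4 statements merged into one kernel-verified Lean document; each statement's English description precedes it below -/
import Mathlib

section
/- Let E be a closed symmetric densely defined operator on a Hilbert space X and let a ∈ ℝ be a point of regular type for E. Denote M_ξ = rng(E − ξ I). Then for every non-real z, X decomposes as a direct sum X = M_z ∔ (M_a)^⊥, with M_z ∩ (M_a)^⊥ = {0}. -/
/-!
`M_a` is closed because `a` is of regular type and `E` is closed. The Shtrauss extension
`Ẽ_a (f + φ) = E f + a φ` on `D ∔ (M_a)ᗮ` is again closed, and `⟪Ẽ_a u, u⟫` is real, so
`|Im z| ‖u‖ ≤ ‖(Ẽ_a - z) u‖`; hence its range `M_z + (M_a)ᗮ` is closed. Both remaining claims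
reduce to one identity: if `⟪(E - z) g, (E - a) g⟫ = 0` then `(E - a) g = 0`, because
`⟪g, (E - a) g⟫` is real and `Im z ≠ 0`. A vector orthogonal to `M_z + (M_a)ᗮ` lies in
`(M_a)ᗮᗮ = M_a`, so it is some `(E - a) g` orthogonal to `(E - z) g`; a vector `(E - z) g` in
`(M_a)ᗮ` is orthogonal to `(E - a) g`, and then `g = 0` by regularity.
-/

open scoped InnerProductSpace
open Filter Topology

section ClosedGraph

variable {R V X Y : Type*} [Ring R] [AddCommGroup V] [Module R V]
  [NormedAddCommGroup X] [Module R X] [NormedAddCommGroup Y] [Module R Y]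

theorem exists_tendsto_of_isClosed_graph [CompleteSpace X] (ι : V →ₗ[R] X) (T : V →ₗ[R] Y)
    (hG : IsClosed (Set.range fun v => (ι v, T v))) {c : ℝ} (hc : 0 < c)
    (hb : ∀ v, c * ‖ι v‖ ≤ ‖T v‖) {v : ℕ → V} {y : Y}
    (hv : Tendsto (fun n => T (v n)) atTop (𝓝 y)) :
    ∃ w, Tendsto (fun n => ι (v n)) atTop (𝓝 (ι w)) ∧ T w = y := by
  have hcauchy : CauchySeq fun n => ι (v n) := by
    have hTv := cauchySeq_iff_tendsto_dist_atTop_0.1 hv.cauchySeq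
    rw [cauchySeq_iff_tendsto_dist_atTop_0]
    refine squeeze_zero (fun _ => dist_nonneg) (fun p => ?_) (by simpa using hTv.const_mul c⁻¹)
    rw [dist_eq_norm, dist_eq_norm, le_inv_mul_iff₀ hc, ← map_sub, ← map_sub]
    exact hb _
  obtain ⟨x, hx⟩ := cauchySeq_tendsto_of_complete hcauchy
  obtain ⟨w, hw⟩ := hG.mem_of_tendsto (hx.prodMk_nhds hv) (.of_forall fun n => ⟨v n, rfl⟩)
  obtain ⟨rfl, rfl⟩ := Prod.mk.inj hw
  exact ⟨w, hx, rfl⟩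

theorem isClosed_range_of_isClosed_graph [CompleteSpace X] (ι : V →ₗ[R] X) (T : V →ₗ[R] Y)
    (hG : IsClosed (Set.range fun v => (ι v, T v))) {c : ℝ} (hc : 0 < c)
    (hb : ∀ v, c * ‖ι v‖ ≤ ‖T v‖) : IsClosed (LinearMap.range T : Set Y) := by
  refine IsSeqClosed.isClosed fun y' y hy' hlim => ?_
  choose v hv using hy'
  obtain ⟨w, -, hw⟩ := exists_tendsto_of_isClosed_graph ι T hG hc hb (v := v)
    (by simpa only [hv] using hlim)
  exact ⟨w, hw⟩

end ClosedGraph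

theorem isClosed_graph_sub_smul {𝕜 V X : Type*} [NormedField 𝕜] [NormedAddCommGroup X]
    [NormedSpace 𝕜 X] {ι T : V → X} (hG : IsClosed (Set.range fun v => (ι v, T v))) (w : 𝕜) :
    IsClosed (Set.range fun v => (ι v, T v - w • ι v)) := by
  have hpre : (Set.range fun v => (ι v, T v - w • ι v)) =
      (fun p : X × X => (p.1, p.2 + w • p.1)) ⁻¹' Set.range fun v => (ι v, T v) := by
    ext ⟨x, y⟩
    simp only [Set.mem_range, Set.mem_preimage, Prod.mk.injEq]
    refine exists_congr fun v => and_congr_right fun hx => ?_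
    rw [hx, sub_eq_iff_eq_add, eq_comm]
  rw [hpre]
  exact hG.preimage (by fun_prop)

section Inner

variable {X : Type*} [NormedAddCommGroup X] [InnerProductSpace ℂ X]

theorem abs_im_mul_norm_le_norm_sub_smul {w h : X} (hwh : (⟪w, h⟫_ℂ).im = 0) (z : ℂ) :
    |z.im| * ‖h‖ ≤ ‖w - z • h‖ := by
  rcases eq_or_ne h 0 with rfl | hh
  · simp
  have him : |z.im| * ‖h‖ * ‖h‖ = |(⟪w - z • h, h⟫_ℂ).im| := by
    rw [inner_sub_left, inner_smul_left, inner_self_eq_norm_sq_to_K]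
    simp [hwh, abs_mul, sq, mul_assoc]
  refine le_of_mul_le_mul_right ?_ (norm_pos_iff.2 hh)
  rw [him]
  exact (Complex.abs_im_le_norm _).trans (norm_inner_le_norm _ _)

theorem eq_zero_of_inner_sub_smul_self_eq_zero {y v : X} (hvy : (⟪v, y⟫_ℂ).im = 0) {ζ : ℂ}
    (hζ : ζ.im ≠ 0) (h : ⟪y - ζ • v, y⟫_ℂ = 0) : y = 0 := by
  rw [inner_sub_left, inner_smul_left, sub_eq_zero] at h
  have hre : (⟪v, y⟫_ℂ).re = 0 := by
    have him := congrArg Complex.im h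
    rw [inner_self_eq_norm_sq_to_K] at him
    simp [hvy, ← Complex.ofReal_pow] at him
    exact him.resolve_left hζ
  have hvy0 : ⟪v, y⟫_ℂ = 0 := Complex.ext hre hvy
  rwa [hvy0, mul_zero, inner_self_eq_zero] at h

end Inner

section Shtrauss

variable {X : Type*} [NormedAddCommGroup X] [InnerProductSpace ℂ X] {D : Submodule ℂ X}

/-- The paper's `M_ξ = rng (E - ξ I)`. -/
def shiftedRange (E : D →ₗ[ℂ] X) (ξ : ℂ) : Submodule ℂ X := LinearMap.range (E - ξ • D.subtype)

variable {E : D →ₗ[ℂ] X}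

theorem apply_sub_smul_mem_shiftedRange (ξ : ℂ) (g : D) :
    E g - ξ • (g : X) ∈ shiftedRange E ξ :=
  ⟨g, by simp⟩

theorem isClosed_shiftedRange [CompleteSpace X]
    (hgraph : IsClosed (Set.range fun g : D => ((g : X), E g))) {ξ : ℂ} {c : ℝ} (hc : 0 < c)
    (hreg : ∀ g : D, c * ‖(g : X)‖ ≤ ‖E g - ξ • (g : X)‖) :
    IsClosed (shiftedRange E ξ : Set X) :=
  isClosed_range_of_isClosed_graph D.subtype (E - ξ • D.subtype)
    (by simpa using isClosed_graph_sub_smul hgraph ξ) hc (by simpa using hreg)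

theorem im_inner_apply_sub_smul_eq_zero
    (hsym : ∀ f g : D, ⟪E f, (g : X)⟫_ℂ = ⟪(f : X), E g⟫_ℂ) (a : ℝ) (g : D) :
    (⟪(g : X), E g - (a : ℂ) • (g : X)⟫_ℂ).im = 0 := by
  have hE : (⟪(g : X), E g⟫_ℂ).im = 0 := by
    rw [← Complex.conj_eq_iff_im, inner_conj_symm, hsym]
  rw [inner_sub_right, inner_smul_right, Complex.sub_im, hE, Complex.im_ofReal_mul,
    inner_self_eq_norm_sq_to_K]
  simp [← Complex.ofReal_pow]

theorem apply_sub_smul_eq_zero_of_inner_eq_zero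
    (hsym : ∀ f g : D, ⟪E f, (g : X)⟫_ℂ = ⟪(f : X), E g⟫_ℂ) {a : ℝ} {z : ℂ} (hz : z.im ≠ 0)
    {g : D} (h : ⟪E g - z • (g : X), E g - (a : ℂ) • (g : X)⟫_ℂ = 0) :
    E g - (a : ℂ) • (g : X) = 0 := by
  refine eq_zero_of_inner_sub_smul_self_eq_zero (im_inner_apply_sub_smul_eq_zero hsym a g)
    (ζ := z - a) (by simpa using hz) ?_
  rwa [show E g - (a : ℂ) • (g : X) - (z - a) • (g : X) = E g - z • (g : X) by module]

/-- The graph of the Shtrauss extension, parametrized by the external sum `D × (M_a)ᗮ`. -/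
theorem isClosed_graph_shtrauss [CompleteSpace X]
    (hgraph : IsClosed (Set.range fun g : D => ((g : X), E g))) {a : ℝ} {c : ℝ} (hc : 0 < c)
    (hreg : ∀ g : D, c * ‖(g : X)‖ ≤ ‖E g - (a : ℂ) • (g : X)‖) :
    IsClosed (Set.range fun p : D × (shiftedRange E a)ᗮ =>
      ((p.1 : X) + p.2, E p.1 + (a : ℂ) • (p.2 : X))) := by
  refine IsSeqClosed.isClosed fun s ⟨h, k⟩ hs hlim => ?_
  choose p hp using hs
  obtain rfl : s = fun n => (((p n).1 : X) + (p n).2, E (p n).1 + (a : ℂ) • ((p n).2 : X)) :=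
    funext fun n => (hp n).symm
  have hsum := hlim.fst_nhds
  have hext := hlim.snd_nhds
  have hEa : Tendsto (fun n => (E - (a : ℂ) • D.subtype) (p n).1) atTop
      (𝓝 (k - (a : ℂ) • h)) :=
    (hext.sub (hsum.const_smul (a : ℂ))).congr fun n => by simp
  obtain ⟨f, hf, hEf⟩ := exists_tendsto_of_isClosed_graph D.subtype _
    (by simpa using isClosed_graph_sub_smul hgraph (a : ℂ)) hc (by simpa using hreg) hEa
  have hφ : Tendsto (fun n => ((p n).2 : X)) atTop (𝓝 (h - f)) :=
    (hsum.sub hf).congr fun n => by simp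
  have hφmem : h - f ∈ (shiftedRange E a)ᗮ :=
    (Submodule.isClosed_orthogonal _).mem_of_tendsto hφ (.of_forall fun n => (p n).2.2)
  refine ⟨(f, ⟨h - f, hφmem⟩), ?_⟩
  simp only [LinearMap.sub_apply, LinearMap.smul_apply, Submodule.subtype_apply] at hEf
  ext
  · simp
  · linear_combination (norm := module) hEf

theorem im_inner_shtrauss_self (hsym : ∀ f g : D, ⟪E f, (g : X)⟫_ℂ = ⟪(f : X), E g⟫_ℂ)
    {a : ℝ} (f : D) {φ : X} (hφ : φ ∈ (shiftedRange E a)ᗮ) :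
    (⟪E f + (a : ℂ) • φ, (f : X) + φ⟫_ℂ).im = 0 := by
  have hEf : ⟪E f, φ⟫_ℂ = a * ⟪(f : X), φ⟫_ℂ := by
    have h0 := Submodule.inner_right_of_mem_orthogonal (apply_sub_smul_mem_shiftedRange _ f) hφ
    rw [inner_sub_left, inner_smul_left, Complex.conj_ofReal, sub_eq_zero] at h0
    exact h0
  have hff : (⟪E f, (f : X)⟫_ℂ).im = 0 := by
    rw [← Complex.conj_eq_iff_im, inner_conj_symm, hsym]
  simp only [inner_add_left, inner_add_right, inner_smul_left, Complex.conj_ofReal, hEf,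
    Complex.add_im, Complex.im_ofReal_mul, hff, inner_self_eq_norm_sq_to_K]
  rw [← inner_conj_symm (f : X) φ, Complex.conj_im]
  simp [← Complex.ofReal_pow]

theorem isClosed_shiftedRange_sup_orthogonal [CompleteSpace X]
    (hsym : ∀ f g : D, ⟪E f, (g : X)⟫_ℂ = ⟪(f : X), E g⟫_ℂ)
    (hgraph : IsClosed (Set.range fun g : D => ((g : X), E g))) {a : ℝ} {c : ℝ} (hc : 0 < c)
    (hreg : ∀ g : D, c * ‖(g : X)‖ ≤ ‖E g - (a : ℂ) • (g : X)‖) {z : ℂ} (hz : z.im ≠ 0) :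
    IsClosed ((shiftedRange E z ⊔ (shiftedRange E a)ᗮ : Submodule ℂ X) : Set X) := by
  set N := (shiftedRange E a)ᗮ
  have haz : (a : ℂ) - z ≠ 0 := fun h => hz (by simpa using congrArg Complex.im h)
  let ι : D × N →ₗ[ℂ] X := D.subtype.coprod N.subtype
  let T : D × N →ₗ[ℂ] X := (E - z • D.subtype).coprod (((a : ℂ) - z) • N.subtype)
  have hι (p : D × N) : ι p = p.1 + p.2 := rfl
  have hT (p : D × N) : T p = E p.1 + (a : ℂ) • (p.2 : X) - z • ι p := by
    simp [T, ι]
    module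
  have hrange : LinearMap.range T = shiftedRange E z ⊔ N := by
    rw [LinearMap.range_coprod, LinearMap.range_smul _ _ haz, Submodule.range_subtype]
    rfl
  rw [← hrange]
  refine isClosed_range_of_isClosed_graph ι T ?_ (abs_pos.2 hz) fun p => ?_
  · simpa only [hT, hι] using isClosed_graph_sub_smul (isClosed_graph_shtrauss hgraph hc hreg) z
  · simpa only [hT, hι] using abs_im_mul_norm_le_norm_sub_smul
      (im_inner_shtrauss_self hsym p.1 p.2.2) z

theorem shiftedRange_sup_orthogonal_eq_top [CompleteSpace X]
    (hsym : ∀ f g : D, ⟪E f, (g : X)⟫_ℂ = ⟪(f : X), E g⟫_ℂ)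
    (hgraph : IsClosed (Set.range fun g : D => ((g : X), E g))) {a : ℝ} {c : ℝ} (hc : 0 < c)
    (hreg : ∀ g : D, c * ‖(g : X)‖ ≤ ‖E g - (a : ℂ) • (g : X)‖) {z : ℂ} (hz : z.im ≠ 0) :
    shiftedRange E z ⊔ (shiftedRange E a)ᗮ = ⊤ := by
  have : CompleteSpace (shiftedRange E z ⊔ (shiftedRange E a)ᗮ : Submodule ℂ X) :=
    (isClosed_shiftedRange_sup_orthogonal hsym hgraph hc hreg hz).completeSpace_coe
  rw [← Submodule.orthogonal_eq_bot_iff, ← Submodule.inf_orthogonal,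
    Submodule.orthogonal_orthogonal_eq_closure,
    (isClosed_shiftedRange hgraph hc hreg).submodule_topologicalClosure_eq, eq_bot_iff]
  rintro _ ⟨hx, g, rfl⟩
  have hperp : ⟪E g - z • (g : X), E g - (a : ℂ) • (g : X)⟫_ℂ = 0 :=
    Submodule.inner_right_of_mem_orthogonal (apply_sub_smul_mem_shiftedRange z g)
      (by simpa using hx)
  simpa using apply_sub_smul_eq_zero_of_inner_eq_zero hsym hz hperp

theorem shiftedRange_inf_orthogonal_eq_bot
    (hsym : ∀ f g : D, ⟪E f, (g : X)⟫_ℂ = ⟪(f : X), E g⟫_ℂ) {a : ℝ} {c : ℝ} (hc : 0 < c)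
    (hreg : ∀ g : D, c * ‖(g : X)‖ ≤ ‖E g - (a : ℂ) • (g : X)‖) {z : ℂ} (hz : z.im ≠ 0) :
    shiftedRange E z ⊓ (shiftedRange E a)ᗮ = ⊥ := by
  rw [eq_bot_iff]
  rintro _ ⟨⟨g, rfl⟩, hx⟩
  have hperp : ⟪E g - z • (g : X), E g - (a : ℂ) • (g : X)⟫_ℂ = 0 := by
    rw [← inner_conj_symm, Submodule.inner_right_of_mem_orthogonal
      (apply_sub_smul_mem_shiftedRange _ g) (by simpa using hx), map_zero]
  have hg : (g : X) = 0 := by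
    have := hreg g
    rw [apply_sub_smul_eq_zero_of_inner_eq_zero hsym hz hperp, norm_zero] at this
    exact norm_le_zero_iff.1 (nonpos_of_mul_nonpos_right this hc)
  simp [(Submodule.coe_eq_zero).1 hg]

end Shtrauss

theorem stmt_10_general {X : Type*} [NormedAddCommGroup X] [InnerProductSpace ℂ X] [CompleteSpace X]
    (D : Submodule ℂ X) (E : D →ₗ[ℂ] X)
    (hsym : ∀ f g : D, ⟪E f, (g : X)⟫_ℂ = ⟪(f : X), E g⟫_ℂ)
    (hclosed : IsClosed {p : X × X | ∃ g : D, (g : X) = p.1 ∧ E g = p.2})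
    (a : ℝ)
    (hreg : ∃ c > 0, ∀ g : D, c * ‖(g : X)‖ ≤ ‖E g - (a : ℂ) • (g : X)‖)
    (z : ℂ) (hz : z.im ≠ 0) :
    LinearMap.range (E - z • D.subtype) ⊔ (LinearMap.range (E - (a : ℂ) • D.subtype))ᗮ = ⊤ ∧
      LinearMap.range (E - z • D.subtype) ⊓ (LinearMap.range (E - (a : ℂ) • D.subtype))ᗮ = ⊥ := by
  obtain ⟨c, hc, hreg⟩ := hreg
  have hgraph : IsClosed (Set.range fun g : D => ((g : X), E g)) := by
    convert hclosed using 1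
    ext ⟨x, y⟩
    simp [Prod.ext_iff]
  exact ⟨shiftedRange_sup_orthogonal_eq_top hsym hgraph hc hreg hz,
    shiftedRange_inf_orthogonal_eq_bot hsym hc hreg hz⟩

/-- for a closed symmetric densely defined operator `E` with a real point `a`
of regular type, `X = M_z ∔ (M_a)ᗮ` for every non-real `z`, where `M_ξ = rng (E - ξ)`. -/
theorem stmt_10 {X : Type*} [NormedAddCommGroup X] [InnerProductSpace ℂ X] [CompleteSpace X]
    (D : Submodule ℂ X) (hD : Dense (D : Set X)) (E : D →ₗ[ℂ] X)
    (hsym : ∀ f g : D, ⟪E f, (g : X)⟫_ℂ = ⟪(f : X), E g⟫_ℂ)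
    (hclosed : IsClosed {p : X × X | ∃ g : D, (g : X) = p.1 ∧ E g = p.2})
    (a : ℝ)
    (hreg : ∃ c > 0, ∀ g : D, c * ‖(g : X)‖ ≤ ‖E g - (a : ℂ) • (g : X)‖)
    (z : ℂ) (hz : z.im ≠ 0) :
    LinearMap.range (E - z • D.subtype) ⊔ (LinearMap.range (E - (a : ℂ) • D.subtype))ᗮ = ⊤ ∧
      LinearMap.range (E - z • D.subtype) ⊓ (LinearMap.range (E - (a : ℂ) • D.subtype))ᗮ = ⊥ :=
  stmt_10_general D E hsym hclosed a hreg z hz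
end

section
/- Let E be a closed densely defined symmetric operator on a Hilbert space X and a ∈ ℝ a point of regular type. The Shtrauss extension Ẽ_a, defined on D(Ẽ_a) = D(E) ∔ (rng(E − aI))^⊥ by Ẽ_a(f_E + φ_a) = E f_E + a φ_a, is a symmetric extension of E. -/
open scoped InnerProductSpace

/-- the Shtrauss extension `Ẽ_a(f + φ) = E f + a φ`, defined on
`D(E) ∔ (rng(E - aI))ᗮ`, is a symmetric extension of `E`. -/
theorem stmt_11 {X : Type*} [NormedAddCommGroup X] [InnerProductSpace ℂ X] [CompleteSpace X]
    (D : Submodule ℂ X) (hD : Dense (D : Set X)) (E : D →ₗ[ℂ] X)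
    (hsym : ∀ f g : D, ⟪E f, (g : X)⟫_ℂ = ⟪(f : X), E g⟫_ℂ)
    (hclosed : IsClosed {p : X × X | ∃ g : D, (g : X) = p.1 ∧ E g = p.2})
    (a : ℝ)
    (hreg : ∃ c > 0, ∀ g : D, c * ‖(g : X)‖ ≤ ‖E g - (a : ℂ) • (g : X)‖) :
    ∀ (f g : D) (φ ψ : X),
      φ ∈ (LinearMap.range (E - (a : ℂ) • D.subtype))ᗮ →
      ψ ∈ (LinearMap.range (E - (a : ℂ) • D.subtype))ᗮ →
      ⟪E f + (a : ℂ) • φ, (g : X) + ψ⟫_ℂ = ⟪(f : X) + φ, E g + (a : ℂ) • ψ⟫_ℂ := by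
  intro f g φ ψ hφ hψ
  have hψf : ⟪E f - (a : ℂ) • (f : X), ψ⟫_ℂ = 0 := by
    refine Submodule.mem_orthogonal _ _ |>.mp hψ _ ⟨f, rfl⟩
  have hφg : ⟪E g - (a : ℂ) • (g : X), φ⟫_ℂ = 0 := by
    refine Submodule.mem_orthogonal _ _ |>.mp hφ _ ⟨g, rfl⟩
  have h1 : ⟪E f, ψ⟫_ℂ = (a : ℂ) * ⟪(f : X), ψ⟫_ℂ := by
    have := hψf
    rw [inner_sub_left, sub_eq_zero, inner_smul_left] at this
    simpa using this
  have h2 : ⟪φ, E g⟫_ℂ = (a : ℂ) * ⟪φ, (g : X)⟫_ℂ := by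
    have : ⟪φ, E g - (a : ℂ) • (g : X)⟫_ℂ = 0 := by
      rw [← inner_conj_symm, hφg, map_zero]
    rw [inner_sub_right, sub_eq_zero, inner_smul_right] at this
    exact this
  simp only [inner_add_left, inner_add_right, inner_smul_left, inner_smul_right,
    hsym f g, h1, h2, Complex.conj_ofReal]
  ring
end

section
/- Let A, B be bounded operators on a Hilbert space X with closed ranges. Then the range of A B* is closed if and only if ker(A) + rng(B*) is a closed subspace of X. -/
/-!
By the open mapping theorem a bounded operator `A` with closed range is a quotient map onto its
range, so a subset of that range is closed exactly when its preimage under `A` is. The range of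
`A B*` is `A (rng B*)`, whose preimage is `ker A + rng B*`.
-/

open Topology

namespace ContinuousLinearMap

variable {𝕜 E F : Type*} [NontriviallyNormedField 𝕜] [NormedAddCommGroup E] [NormedSpace 𝕜 E]
  [CompleteSpace E] [NormedAddCommGroup F] [NormedSpace 𝕜 F] [CompleteSpace F]

theorem isQuotientMap_rangeRestrict (A : E →L[𝕜] F)
    (hA : IsClosed (LinearMap.range (A : E →ₗ[𝕜] F) : Set F)) :
    IsQuotientMap A.rangeRestrict := by
  have : CompleteSpace (LinearMap.range (A : E →ₗ[𝕜] F)) := hA.completeSpace_coe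
  have hsurj : Function.Surjective A.rangeRestrict := LinearMap.surjective_rangeRestrict _
  exact (A.rangeRestrict.isOpenMap hsurj).isQuotientMap A.rangeRestrict.continuous hsurj

theorem isClosed_iff_isClosed_preimage_of_subset_range (A : E →L[𝕜] F)
    (hA : IsClosed (LinearMap.range (A : E →ₗ[𝕜] F) : Set F)) {T : Set F}
    (hT : T ⊆ LinearMap.range (A : E →ₗ[𝕜] F)) :
    IsClosed T ↔ IsClosed (A ⁻¹' T) := by
  rw [hA.isClosedEmbedding_subtypeVal.isClosed_iff_preimage_isClosed (by rwa [Subtype.range_coe]),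
    ← (A.isQuotientMap_rangeRestrict hA).isClosed_preimage]
  rfl

theorem isClosed_map_iff_isClosed_sup_ker (A : E →L[𝕜] F)
    (hA : IsClosed (LinearMap.range (A : E →ₗ[𝕜] F) : Set F)) (M : Submodule 𝕜 E) :
    IsClosed (M.map (A : E →ₗ[𝕜] F) : Set F) ↔
      IsClosed ((M ⊔ LinearMap.ker (A : E →ₗ[𝕜] F) : Submodule 𝕜 E) : Set E) := by
  rw [A.isClosed_iff_isClosed_preimage_of_subset_range hA (LinearMap.map_le_range),
    ← Submodule.comap_map_eq]
  rfl

end ContinuousLinearMap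

theorem stmt_16_general {X : Type*} [NormedAddCommGroup X] [InnerProductSpace ℂ X] [CompleteSpace X]
    (A B : X →L[ℂ] X)
    (hA : IsClosed ((LinearMap.range (A : X →ₗ[ℂ] X) : Submodule ℂ X) : Set X)) :
    IsClosed ((LinearMap.range ((A.comp (ContinuousLinearMap.adjoint B) : X →L[ℂ] X) : X →ₗ[ℂ] X) : Submodule ℂ X) : Set X)
      ↔ IsClosed ((LinearMap.ker (A : X →ₗ[ℂ] X) ⊔ LinearMap.range (ContinuousLinearMap.adjoint B : X →ₗ[ℂ] X) :
          Submodule ℂ X) : Set X) := by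
  rw [ContinuousLinearMap.toLinearMap_comp, LinearMap.range_comp, sup_comm]
  exact A.isClosed_map_iff_isClosed_sup_ker hA _

/-- for bounded operators `A, B` with closed ranges on a Hilbert space,
`rng (A B*)` is closed iff `ker A + rng B*` is closed. -/
theorem stmt_16 {X : Type*} [NormedAddCommGroup X] [InnerProductSpace ℂ X] [CompleteSpace X]
    (A B : X →L[ℂ] X)
    (hA : IsClosed ((LinearMap.range (A : X →ₗ[ℂ] X) : Submodule ℂ X) : Set X))
    (hB : IsClosed ((LinearMap.range (B : X →ₗ[ℂ] X) : Submodule ℂ X) : Set X)) :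
    IsClosed ((LinearMap.range ((A.comp (ContinuousLinearMap.adjoint B) : X →L[ℂ] X) : X →ₗ[ℂ] X) : Submodule ℂ X) : Set X)
      ↔ IsClosed ((LinearMap.ker (A : X →ₗ[ℂ] X) ⊔ LinearMap.range (ContinuousLinearMap.adjoint B : X →ₗ[ℂ] X) :
          Submodule ℂ X) : Set X) :=
  stmt_16_general A B hA
end

section
/- Let E be a densely defined symmetric operator on a Hilbert space X. For non-real ζ and ξ lying in the same open half-plane (both in ℂ₊ or both in ℂ₋), rng(E − ζI) ∩ (rng(E − ξI))^⊥ = {0}. -/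
open scoped InnerProductSpace

/-- for a densely defined symmetric operator `E` and non-real `ζ, ξ` in the
same open half-plane, `rng(E - ζ) ∩ (rng(E - ξ))ᗮ = {0}`. -/
theorem stmt_17 {X : Type*} [NormedAddCommGroup X] [InnerProductSpace ℂ X] [CompleteSpace X]
    (D : Submodule ℂ X) (hD : Dense (D : Set X)) (E : D →ₗ[ℂ] X)
    (hsym : ∀ f g : D, ⟪E f, (g : X)⟫_ℂ = ⟪(f : X), E g⟫_ℂ)
    (ζ ξ : ℂ) (hhalf : (0 < ζ.im ∧ 0 < ξ.im) ∨ (ζ.im < 0 ∧ ξ.im < 0)) :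
    LinearMap.range (E - ζ • D.subtype) ⊓ (LinearMap.range (E - ξ • D.subtype))ᗮ = ⊥ := by
  rw [Submodule.eq_bot_iff]
  rintro y ⟨⟨f, rfl⟩, hperp⟩
  have h0 : ⟪(E - ξ • D.subtype) f, (E - ζ • D.subtype) f⟫_ℂ = 0 :=
    hperp _ (LinearMap.mem_range_self _ f)
  have hfz : (f : X) = 0 := by
    set a : ℝ := (⟪E f, (f : X)⟫_ℂ).re with ha
    have hAim : (⟪E f, (f : X)⟫_ℂ).im = 0 := by
      apply Complex.conj_eq_iff_im.mp
      rw [inner_conj_symm]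
      exact (hsym f f).symm
    have hAeq : ⟪E f, (f : X)⟫_ℂ = (a : ℂ) := by
      apply Complex.ext <;> simp [hAim, ha]
    have hAeq' : ⟪(f : X), E f⟫_ℂ = (a : ℂ) := by
      rw [← hsym f f, hAeq]
    have hC : ((‖E f‖ ^ 2 : ℝ) : ℂ) - ζ * (a : ℂ) - (starRingEnd ℂ) ξ * (a : ℂ)
        + (starRingEnd ℂ) ξ * ζ * ((‖(f : X)‖ ^ 2 : ℝ) : ℂ) = 0 := by
      have hself1 : ⟪E f, E f⟫_ℂ = ((‖E f‖ ^ 2 : ℝ) : ℂ) := by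
        rw [inner_self_eq_norm_sq_to_K]; norm_cast
      have hself2 : ⟪(f : X), (f : X)⟫_ℂ = ((‖(f : X)‖ ^ 2 : ℝ) : ℂ) := by
        rw [inner_self_eq_norm_sq_to_K]; norm_cast
      simp only [LinearMap.sub_apply, LinearMap.smul_apply, Submodule.subtype_apply,
        inner_sub_left, inner_sub_right, inner_smul_left, inner_smul_right,
        hself1, hself2, hAeq, hAeq'] at h0
      linear_combination h0
    have hRe := congrArg Complex.re hC
    have hIm := congrArg Complex.im hC
    simp only [Complex.add_re, Complex.sub_re, Complex.mul_re, Complex.mul_im,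
      Complex.add_im, Complex.sub_im, Complex.ofReal_re, Complex.ofReal_im,
      Complex.conj_re, Complex.conj_im, Complex.zero_re, Complex.zero_im] at hRe hIm
    set t : ℝ := ‖(f : X)‖ with htdef
    set b : ℝ := ‖E f‖ with hbdef
    have hCS : a ^ 2 ≤ b ^ 2 * t ^ 2 := by
      have h3 : ‖⟪E f, (f : X)⟫_ℂ‖ ≤ b * t := norm_inner_le_norm _ _
      have h4 : |a| ≤ ‖⟪E f, (f : X)⟫_ℂ‖ := Complex.abs_re_le_norm _
      nlinarith [norm_nonneg (E f), norm_nonneg ((f : X) : X), abs_nonneg a, sq_abs a,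
        norm_nonneg (⟪E f, (f : X)⟫_ℂ)]
    have ht : t = 0 := by
      by_contra htne
      have htpos : 0 < t := lt_of_le_of_ne (norm_nonneg _) (Ne.symm htne)
      have ht2 : 0 < t ^ 2 := by positivity
      have hprod : 0 < ζ.im * ξ.im := by rcases hhalf with ⟨h1, h2⟩ | ⟨h1, h2⟩ <;> nlinarith
      have hkey1 : ξ.im * (a - ζ.re * t ^ 2) = ζ.im * (a - ξ.re * t ^ 2) := by
        linear_combination hIm
      have hb2 : b ^ 2 = (ζ.re + ξ.re) * a - (ξ.re * ζ.re + ξ.im * ζ.im) * t ^ 2 := by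
        linear_combination hRe
      rw [hb2] at hCS
      have hkey2 : (a - ζ.re * t ^ 2) * (a - ξ.re * t ^ 2) + ζ.im * ξ.im * (t ^ 2) ^ 2 ≤ 0 := by
        nlinarith [hCS]
      have h5 : ζ.im * ξ.im * ((a - ζ.re * t ^ 2) * (a - ξ.re * t ^ 2))
          = (ζ.im * (a - ξ.re * t ^ 2)) ^ 2 := by
        linear_combination (ζ.im * (a - ξ.re * t ^ 2)) * hkey1
      nlinarith [h5, hkey2, hprod, ht2, sq_nonneg (ζ.im * (a - ξ.re * t ^ 2)),
        mul_pos hprod ht2, mul_pos (mul_pos hprod ht2) (mul_pos hprod ht2)]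
    simpa [htdef] using ht
  have hf0 : f = 0 := Subtype.ext hfz
  simp [hf0]
end
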